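/- Let C be an ℓ-quasi-cyclic code of length mℓ over F_q, P(X) = Σ P_i X^i a generator polynomial of C and Q(X) = Σ Q_i X^i a generator polynomial of its dual C^⊥. Then P(X)·(^tQ*(X)) ≡ 0 (mod X^m − 1) in M_ℓ(F_q)[X], where Q* is the reciprocal polynomial of Q and ^tQ is obtained by transposing each matrix coefficient of Q. -/

import Mathlib

/-- The cyclic shift by `j` positions on `F^n`. -/
def shiftBy {F : Type*} {n : ℕ} (j : ℕ) (c : Fin n → F) : Fin n → F :=
  fun i => c ⟨(i.val + j) % n, Nat.mod_lt _ i.pos⟩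

/-- The vector of `F_q^{mℓ}` formed by the `t`-th rows of the matrix
coefficients `P_0, P_1, …, P_{m-1}`. -/
def rowVec {F : Type*} [Field F] {m ℓ : ℕ} (hℓ : 0 < ℓ)
    (P : Fin m → Matrix (Fin ℓ) (Fin ℓ) F) (t : Fin ℓ) : Fin (m * ℓ) → F :=
  fun idx =>
    P ⟨idx.val / ℓ, by
        have h := idx.isLt
        exact Nat.div_lt_of_lt_mul (lt_of_lt_of_eq h (Nat.mul_comm m ℓ))⟩
      t ⟨idx.val % ℓ, Nat.mod_lt _ hℓ⟩

/-!
Index `F^{mℓ}` by `finProdFinEquiv (i, u)`, the `u`-th entry of block `i`. In these coordinates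
the inner product of the `t`-th row vector of `Q` shifted by `j` blocks with the `s`-th row vector
of `P` is the `(s, t)` entry of `∑ i, P i * (Q (i + j))ᵀ`, and it vanishes because the first vector
lies in `C^⊥` and the second in `C`. Modulo `X ^ m - 1` the product `P(X) · ᵗQ*(X)` is a cyclic
convolution whose coefficient of `X ^ (m - 1 - j)` is exactly `∑ i, P i * (Q (i + j))ᵀ`.
-/

open Polynomial Matrix

theorem shiftBy_zero {α : Type*} {n : ℕ} (c : Fin n → α) : shiftBy 0 c = c := by
  funext i
  simp [shiftBy, Nat.mod_eq_of_lt i.isLt]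

theorem shiftBy_mul_finProdFinEquiv {α : Type*} {m ℓ : ℕ} (v : Fin (m * ℓ) → α) (j i : Fin m)
    (u : Fin ℓ) :
    shiftBy (j * ℓ) v (finProdFinEquiv (i, u)) = v (finProdFinEquiv (i + j, u)) := by
  unfold shiftBy
  congr 1
  apply finProdFinEquiv.symm.injective
  simp only [finProdFinEquiv_symm_apply, Equiv.symm_apply_apply, Prod.mk.injEq]
  have hu : (u : ℕ) / ℓ = 0 := Nat.div_eq_of_lt u.isLt
  constructor <;> ext
  · simp only [Fin.divNat, Fin.val_add, finProdFinEquiv_apply_val]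
    rw [Nat.mod_mul_left_div_self, show (u : ℕ) + ℓ * i + j * ℓ = u + ℓ * (i + j) by ring,
      Nat.add_mul_div_left _ _ u.pos, hu, zero_add]
  · simp [Fin.modNat, Nat.mod_eq_of_lt u.isLt]

theorem Fin.sum_sum_add_rev {M : Type*} [AddCommMonoid M] {m : ℕ}
    (f : Fin m → Fin m → Fin m → M) :
    ∑ i, ∑ k, f (i + k) i k.rev = ∑ c, ∑ i, f c.rev i (i + c) := by
  cases m with
  | zero => simp
  | succ n =>
    conv_rhs => rw [Finset.sum_comm]
    refine Finset.sum_congr rfl fun i _ => ?_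
    refine Fintype.sum_equiv (Fin.revPerm.trans (Equiv.subRight i)) _ _ fun k => ?_
    simp only [Equiv.trans_apply, Fin.revPerm_apply, Equiv.subRight_apply, ← Fin.last_sub]
    congr 1 <;> abel

section Polynomial

variable {R : Type*} [Ring R]

theorem X_pow_sub_one_dvd_monomial_sub (m n : ℕ) (a : R) :
    (X ^ m - 1 : R[X]) ∣ monomial n a - monomial (n % m) a := by
  have hsplit : monomial n a = X ^ (m * (n / m)) * monomial (n % m) a := by
    rw [X_pow_mul_monomial, Nat.mod_add_div]
  rw [hsplit, ← sub_one_mul]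
  exact dvd_mul_of_dvd_left (pow_one_sub_dvd_pow_mul_sub_one _ _ _) _

theorem X_pow_sub_one_dvd_mul_sub_cyclicConv {m : ℕ} (a b : Fin m → R) :
    (X ^ m - 1 : R[X]) ∣
      (∑ i : Fin m, C (a i) * X ^ (i : ℕ)) * (∑ k : Fin m, C (b k) * X ^ (k : ℕ)) -
        ∑ i, ∑ k, monomial ((i + k : Fin m) : ℕ) (a i * b k) := by
  simp_rw [C_mul_X_pow_eq_monomial, Finset.sum_mul_sum, monomial_mul_monomial,
    ← Finset.sum_sub_distrib, Fin.val_add]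
  exact Finset.dvd_sum fun i _ => Finset.dvd_sum fun k _ => X_pow_sub_one_dvd_monomial_sub _ _ _

end Polynomial

section RowVec

variable {F : Type*} [Field F] {m ℓ : ℕ} (hℓ : 0 < ℓ)

theorem rowVec_finProdFinEquiv (P : Fin m → Matrix (Fin ℓ) (Fin ℓ) F) (t : Fin ℓ) (i : Fin m)
    (u : Fin ℓ) : rowVec hℓ P t (finProdFinEquiv (i, u)) = P i t u :=
  congrArg (fun p : Fin m × Fin ℓ => P p.1 t p.2) (finProdFinEquiv.symm_apply_apply (i, u))

theorem rowVec_mem_span_shiftBy (hm : 0 < m) (P : Fin m → Matrix (Fin ℓ) (Fin ℓ) F)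
    (t : Fin ℓ) :
    rowVec hℓ P t ∈ Submodule.span F
      {x | ∃ (t : Fin ℓ) (j : Fin m), x = shiftBy (j.val * ℓ) (rowVec hℓ P t)} :=
  Submodule.subset_span ⟨t, ⟨0, hm⟩, by rw [zero_mul, shiftBy_zero]⟩

theorem sum_shiftBy_rowVec_mul_rowVec (P Q : Fin m → Matrix (Fin ℓ) (Fin ℓ) F) (s t : Fin ℓ)
    (j : Fin m) :
    ∑ x, shiftBy (j.val * ℓ) (rowVec hℓ Q t) x * rowVec hℓ P s x =
      (∑ i, P i * (Q (i + j))ᵀ) s t := by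
  rw [← finProdFinEquiv.sum_comp, Fintype.sum_prod_type, Matrix.sum_apply]
  simp only [shiftBy_mul_finProdFinEquiv, rowVec_finProdFinEquiv, mul_apply, transpose_apply]
  exact Finset.sum_congr rfl fun i _ => Finset.sum_congr rfl fun u _ => mul_comm _ _

end RowVec

theorem generator_poly_dual_key_equation_general
    (F : Type*) [Field F] (m ℓ : ℕ) (hℓ : 0 < ℓ)
    (C : Submodule F (Fin (m * ℓ) → F))
    (P Q : Fin m → Matrix (Fin ℓ) (Fin ℓ) F)
    (hP : Submodule.span F
      {x | ∃ (t : Fin ℓ) (j : Fin m), x = shiftBy (j.val * ℓ) (rowVec hℓ P t)} = C)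
    (hQ : (Submodule.span F
        {x | ∃ (t : Fin ℓ) (j : Fin m), x = shiftBy (j.val * ℓ) (rowVec hℓ Q t)} :
        Set (Fin (m * ℓ) → F)) =
      {x | ∀ c ∈ C, ∑ i : Fin (m * ℓ), x i * c i = 0}) :
    ∃ h : Polynomial (Matrix (Fin ℓ) (Fin ℓ) F),
      (∑ i : Fin m, Polynomial.C (P i) * Polynomial.X ^ i.val) *
        (∑ i : Fin m, Polynomial.C (Matrix.transpose (Q i.rev)) * Polynomial.X ^ i.val) =
      ((Polynomial.X : Polynomial (Matrix (Fin ℓ) (Fin ℓ) F)) ^ m - 1) * h := by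
  have hkey : ∀ j : Fin m, ∑ i, P i * (Q (i + j))ᵀ = 0 := by
    intro j
    ext s t
    have hQt : shiftBy (j.val * ℓ) (rowVec hℓ Q t) ∈ {x | ∀ c ∈ C, ∑ i, x i * c i = 0} :=
      hQ ▸ Submodule.subset_span ⟨t, j, rfl⟩
    rw [← sum_shiftBy_rowVec_mul_rowVec]
    exact hQt _ (hP ▸ rowVec_mem_span_shiftBy hℓ j.pos P s)
  have hconv : ∑ i, ∑ k, monomial ((i + k : Fin m) : ℕ) (P i * (Q k.rev)ᵀ) = 0 := by
    rw [Fin.sum_sum_add_rev fun r i k => monomial (r : ℕ) (P i * (Q k)ᵀ)]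
    simp_rw [← map_sum, hkey, map_zero, Finset.sum_const_zero]
  have hdvd := X_pow_sub_one_dvd_mul_sub_cyclicConv P fun k => (Q k.rev)ᵀ
  rwa [hconv, sub_zero] at hdvd

/-- Let `P(X)` be a generator polynomial of an `ℓ`-quasi-cyclic code `C` of
length `mℓ` and `Q(X)` a generator polynomial of its dual. Then
`P(X)·(ᵗQ*(X)) ≡ 0 (mod X^m - 1)`, where `Q*` is the reciprocal polynomial of
`Q` and `ᵗQ` has the transposed matrix coefficients. -/
theorem generator_poly_dual_key_equation
    (F : Type*) [Field F] [Fintype F] (m ℓ : ℕ) (hm : 0 < m) (hℓ : 0 < ℓ)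
    (C : Submodule F (Fin (m * ℓ) → F))
    (hqc : ∀ c ∈ C, shiftBy ℓ c ∈ C)
    (P Q : Fin m → Matrix (Fin ℓ) (Fin ℓ) F)
    (hP : Submodule.span F
      {x | ∃ (t : Fin ℓ) (j : Fin m), x = shiftBy (j.val * ℓ) (rowVec hℓ P t)} = C)
    (hQ : (Submodule.span F
        {x | ∃ (t : Fin ℓ) (j : Fin m), x = shiftBy (j.val * ℓ) (rowVec hℓ Q t)} :
        Set (Fin (m * ℓ) → F)) =
      {x | ∀ c ∈ C, ∑ i : Fin (m * ℓ), x i * c i = 0}) :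
    ∃ h : Polynomial (Matrix (Fin ℓ) (Fin ℓ) F),
      (∑ i : Fin m, Polynomial.C (P i) * Polynomial.X ^ i.val) *
        (∑ i : Fin m, Polynomial.C (Matrix.transpose (Q i.rev)) * Polynomial.X ^ i.val) =
      ((Polynomial.X : Polynomial (Matrix (Fin ℓ) (Fin ℓ) F)) ^ m - 1) * h :=
  generator_poly_dual_key_equation_general F m ℓ hℓ C P Q hP hQ
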